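/- arXiv:1506.07803 — 4 statements merged into one kernel-verified Lean document; each statement's English description precedes it below -/
import Mathlib

section
/- Let K1 = L, K2 = X, K3 = [K1, K2], and let Q = 2·{K2², K1} + K3² + (4 − (α+β)(α+β+2))·K2² − 2·{K1, K2} + (−4 + 2(α+1)(α+β))·K2. Then Q p = (α² − 1)·p for every polynomial p ∈ ℝ[x]; that is, the Casimir operator of the Jacobi algebra acts as the scalar α² − 1 in this realization. -/
open Polynomial

/-- The hypergeometric operator `L` on `ℝ[x]`. -/
noncomputable def Lop (α β : ℝ) (p : ℝ[X]) : ℝ[X] :=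
  X * (1 - X) * derivative (derivative p) + (C (α + 1) - C (α + β + 2) * X) * derivative p

/-- The multiplication-by-`x` operator on `ℝ[x]`. -/
noncomputable def Xop (p : ℝ[X]) : ℝ[X] := X * p

/-- The Casimir operator of the Jacobi algebra acts as the scalar `α² - 1` in the
realization `K1 = L`, `K2 = X`, `K3 = [K1, K2]`:
`Q = 2{K2²,K1} + K3² + (4 - (α+β)(α+β+2))K2² - 2{K1,K2} + (-4 + 2(α+1)(α+β))K2`. -/
theorem jacobi_casimir_value (α β : ℝ) :
    ∀ K1 K2 K3 : ℝ[X] → ℝ[X],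
      K1 = Lop α β → K2 = Xop → K3 = (fun p => K1 (K2 p) - K2 (K1 p)) →
      ∀ p : ℝ[X],
        (2 : ℝ) • (K2 (K2 (K1 p)) + K1 (K2 (K2 p)))
          + K3 (K3 p)
          + (4 - (α + β) * (α + β + 2)) • K2 (K2 p)
          - (2 : ℝ) • (K1 (K2 p) + K2 (K1 p))
          + (-4 + 2 * (α + 1) * (α + β)) • K2 p
        = (α ^ 2 - 1) • p := by
  rintro _ _ _ rfl rfl rfl p
  simp only [Lop, Xop, derivative_add, derivative_mul, derivative_sub, derivative_X,
    derivative_one, derivative_C, smul_eq_C_mul, map_add, map_sub, map_mul, map_one,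
    map_ofNat, map_neg, derivative_ofNat, derivative_zero, map_pow]
  ring
end

section
/- Let N be a natural number and suppose τ1 λ_N + τ2 λ_{N+1} + τ3 = 0, where λ_n = −n(n+α+β+1). Then the operator M maps the space of polynomials of degree at most N into itself: for every p ∈ ℝ[x] with deg p ≤ N one has deg(M p) ≤ N. -/
open Polynomial

/-- The tridiagonalized operator `M = τ1·X∘L + τ2·L∘X + τ3·X + τ0·Id` on `ℝ[x]`. -/
noncomputable def Mop (α β τ0 τ1 τ2 τ3 : ℝ) (p : ℝ[X]) : ℝ[X] :=
  C τ1 * (X * Lop α β p) + C τ2 * Lop α β (X * p) + C τ3 * (X * p) + C τ0 * p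

/-- `λ_n = -n(n+α+β+1)`. -/
noncomputable def lamJ (α β : ℝ) (n : ℕ) : ℝ := -(n : ℝ) * ((n : ℝ) + α + β + 1)


lemma Lop_pow (α β : ℝ) (n : ℕ) : Lop α β (X^(n+1) : ℝ[X]) =
    C (((n:ℝ)+1)*(((n:ℝ)+1)+α)) * X^n + C (lamJ α β (n+1)) * X^(n+1) := by
  match n with
  | 0 => simp [Lop, lamJ, map_ofNat]; ring
  | m+1 =>
    simp only [Lop, lamJ, derivative_X_pow, derivative_C_mul, Nat.add_sub_cancel]
    push_cast
    have h1 : (X:ℝ[X])^(m+1) = X * X^m := by ring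
    rw [h1]
    simp only [C_add, C_mul, C_neg, C_1, map_natCast, map_ofNat]
    ring

lemma Lop_Cmul (α β c : ℝ) (p : ℝ[X]) : Lop α β (C c * p) = C c * Lop α β p := by
  simp only [Lop, derivative_C_mul]; ring

lemma Mop_Cmul (α β τ0 τ1 τ2 τ3 c : ℝ) (p : ℝ[X]) :
    Mop α β τ0 τ1 τ2 τ3 (C c * p) = C c * Mop α β τ0 τ1 τ2 τ3 p := by
  simp only [Mop, mul_left_comm X (C c), Lop_Cmul]; ring

lemma Mop_pow (α β τ0 τ1 τ2 τ3 : ℝ) (n : ℕ) : Mop α β τ0 τ1 τ2 τ3 ((X:ℝ[X])^n) =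
    C (τ1*((n:ℝ)*((n:ℝ)+α)) + τ2*(((n:ℝ)+1)*(((n:ℝ)+1)+α)) + τ0) * X^n
      + C (τ1 * lamJ α β n + τ2 * lamJ α β (n+1) + τ3) * X^(n+1) := by
  have hx : (X:ℝ[X]) * X^n = X^(n+1) := by ring
  match n with
  | 0 =>
    have hL1 : Lop α β (1:ℝ[X]) = 0 := by simp [Lop]
    have hLX : Lop α β (X:ℝ[X]) = C (α+1) - C (α+β+2) * X := by simp [Lop]
    simp only [Mop, pow_zero, mul_one, hL1, hLX]
    simp only [lamJ, C_add, C_mul, C_neg, C_1, map_natCast, map_ofNat]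
    push_cast
    ring
  | m+1 =>
    simp only [Mop, hx]
    rw [Lop_pow, Lop_pow]
    simp only [lamJ, C_add, C_mul, C_neg, C_1, map_natCast, map_ofNat]
    push_cast
    ring

noncomputable def MopL (α β τ0 τ1 τ2 τ3 : ℝ) : ℝ[X] →ₗ[ℝ] ℝ[X] where
  toFun := Mop α β τ0 τ1 τ2 τ3
  map_add' p q := by simp only [Mop, Lop, derivative_add, mul_add]; ring
  map_smul' c p := by
    simp only [RingHom.id_apply, smul_eq_C_mul]
    exact Mop_Cmul α β τ0 τ1 τ2 τ3 c p

lemma degCXpow (a : ℝ) (n : ℕ) : ((C a * X^n : ℝ[X])).degree ≤ (n : WithBot ℕ) := by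
  refine (degree_mul_le _ _).trans ?_
  refine le_trans (add_le_add degree_C_le (degree_X_pow _).le) ?_
  simp

/-- Under the truncation condition `τ1 λ_N + τ2 λ_{N+1} + τ3 = 0`, the operator `M`
preserves the space of polynomials of degree at most `N`. -/
theorem M_preserves_degree (α β τ0 τ1 τ2 τ3 : ℝ) (h : τ1 + τ2 = 1) (N : ℕ)
    (htrunc : τ1 * lamJ α β N + τ2 * lamJ α β (N + 1) + τ3 = 0) :
    ∀ p : ℝ[X], p.degree ≤ (N : WithBot ℕ) →
      (Mop α β τ0 τ1 τ2 τ3 p).degree ≤ (N : WithBot ℕ) := by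
  intro p hp
  have hrep : p = ∑ i ∈ Finset.range (N+1), p.coeff i • (X:ℝ[X])^i := by
    conv_lhs => rw [p.as_sum_range' (N+1) (Nat.lt_succ_of_le (natDegree_le_iff_degree_le.2 hp))]
    refine Finset.sum_congr rfl fun i _ => ?_
    rw [smul_eq_C_mul, Polynomial.C_mul_X_pow_eq_monomial]
  have : Mop α β τ0 τ1 τ2 τ3 p
      = ∑ i ∈ Finset.range (N+1), C (p.coeff i) * Mop α β τ0 τ1 τ2 τ3 ((X:ℝ[X])^i) := by
    have hM : ∀ q : ℝ[X], Mop α β τ0 τ1 τ2 τ3 q = MopL α β τ0 τ1 τ2 τ3 q := fun _ => rfl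
    rw [hM]
    conv_lhs => rw [hrep]
    rw [map_sum]
    refine Finset.sum_congr rfl fun i _ => ?_
    rw [map_smul, smul_eq_C_mul, hM]
  rw [this]
  refine (Polynomial.degree_sum_le _ _).trans ?_
  apply Finset.sup_le
  intro i hi
  rw [Finset.mem_range, Nat.lt_succ_iff] at hi
  rw [Mop_pow]
  rcases eq_or_lt_of_le hi with rfl | hlt
  · rw [htrunc, C_0, zero_mul, add_zero, ← mul_assoc, ← C_mul]
    exact degCXpow _ _
  · refine (degree_mul_le _ _).trans ?_
    calc (C (p.coeff i)).degree + _ ≤ 0 + (i+1 : ℕ) := by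
          refine add_le_add degree_C_le ?_
          refine (degree_add_le _ _).trans (max_le ((degCXpow _ _).trans ?_) (degCXpow _ _))
          exact_mod_cast Nat.cast_le.2 (Nat.le_succ i)
      _ ≤ (N : WithBot ℕ) := by
          rw [zero_add]
          exact_mod_cast Nat.cast_le.2 hlt
end

section
/- Let A1 = L, A2 = M, and A3 = [A1, A2]. Then, as equalities of ℝ-linear operators on ℝ[x]: [A2, A3] = −2{A1, A2} + 2A2² + (1 − α² + 4(τ0 + τ2 − τ2²))·A1 + δ·A2 + ε1·Id, and [A3, A1] = 2{A1, A2} − 2A1² − (α+β)(α+β+2)·A2 + δ·A1 + ε2·Id, where δ = α(α+β+1) + β − 4τ0 − 2τ3, ε1 = 2τ0² + (1−α²)τ3 + 2τ0τ3 + 2(α+1)(β+1)(τ2²−τ2) − (α+1)(α+β)τ0, and ε2 = (α+β)((α+β+2)τ0 + (α+1)τ3). Thus L, M and their commutator realize the Racah–Wilson algebra. -/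
open Polynomial

set_option maxHeartbeats 4000000

lemma Mc (α β τ0 τ2 τ3 : ℝ) (p : ℝ[X]) :
    Mop α β τ0 (1 - τ2) τ2 τ3 p =
      (X * X - X * X * X) * derivative (derivative p)
      + (C (α + 1) * X - C (α + β + 2) * (X * X) + C (2 * τ2) * (X - X * X)) * derivative p
      + (C τ2 * (C (α + 1) - C (α + β + 2) * X) + C τ3 * X + C τ0) * p := by
  simp only [Mop, Lop, derivative_add, derivative_sub, derivative_mul, derivative_X,
    derivative_one, derivative_C, map_add, map_sub, map_mul, map_one, map_ofNat,
    mul_zero, zero_mul, add_zero, zero_add, mul_one, one_mul, sub_zero]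
  ring

noncomputable def R3 (α β τ0 τ2 τ3 : ℝ) (p : ℝ[X]) : ℝ[X] :=
  (C (2:ℝ) * (X*X) - C (4:ℝ) * (X*X*X) + C (2:ℝ) * (X*X*X*X)) * derivative (derivative (derivative p))
  + (C (5 + 3*α + 2*τ2) * X - C (15 + 6*τ2 + 3*β + 6*α) * (X*X)
      + C (10 + 4*τ2 + 3*β + 3*α) * (X*X*X)) * derivative (derivative p)
  + (C (1 + 2*τ2 + 2*α + 2*α*τ2 + α^2)
      + C (-8 + 2*τ3 - 12*τ2 - 4*β - 2*β*τ2 - 8*α - 6*α*τ2 - 2*α*β - 2*α^2) * X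
      + C (8 - 2*τ3 + 12*τ2 + 6*β + 4*β*τ2 + β^2 + 6*α + 4*α*τ2 + 2*α*β + α^2) * (X*X)) * derivative p
  + (C (τ3 - 2*τ2 - β*τ2 + α*τ3 - 3*α*τ2 - α*β*τ2 - α^2*τ2)
      + C (-2*τ3 + 4*τ2 - β*τ3 + 4*β*τ2 + β^2*τ2 - α*τ3 + 4*α*τ2 + 2*α*β*τ2 + α^2*τ2) * X) * p

lemma A3c (α β τ0 τ2 τ3 : ℝ) (p : ℝ[X]) :
    Lop α β (Mop α β τ0 (1 - τ2) τ2 τ3 p) - Mop α β τ0 (1 - τ2) τ2 τ3 (Lop α β p)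
      = R3 α β τ0 τ2 τ3 p := by
  rw [Mc, Mc]
  simp only [R3, Lop, derivative_add, derivative_sub, derivative_mul, derivative_X,
    derivative_one, derivative_C, derivative_ofNat, derivative_zero, map_add, map_sub,
    map_mul, map_one, map_pow, map_neg, map_ofNat,
    mul_zero, zero_mul, add_zero, zero_add, mul_one, one_mul, sub_zero]
  ring

/-- `A1 = L`, `A2 = M` and `A3 = [A1, A2]` realize the Racah--Wilson algebra:
`[A2,A3] = -2{A1,A2} + 2A2² + γ₁ A1 + δ A2 + ε₁` and
`[A3,A1] = 2{A1,A2} - 2A1² + γ₂ A2 + δ A1 + ε₂`. -/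
theorem racah_wilson_from_tridiagonalization (α β τ0 τ1 τ2 τ3 : ℝ) (h : τ1 + τ2 = 1) :
    ∀ A1 A2 A3 : ℝ[X] → ℝ[X],
      A1 = Lop α β → A2 = Mop α β τ0 τ1 τ2 τ3 →
      A3 = (fun p => A1 (A2 p) - A2 (A1 p)) →
      (∀ p : ℝ[X],
        A2 (A3 p) - A3 (A2 p) =
          (-2 : ℝ) • (A1 (A2 p) + A2 (A1 p)) + (2 : ℝ) • A2 (A2 p)
            + (1 - α ^ 2 + 4 * (τ0 + τ2 - τ2 ^ 2)) • A1 p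
            + (α * (α + β + 1) + β - 4 * τ0 - 2 * τ3) • A2 p
            + (2 * τ0 ^ 2 + (1 - α ^ 2) * τ3 + 2 * τ0 * τ3
                + 2 * (α + 1) * (β + 1) * (τ2 ^ 2 - τ2)
                - (α + 1) * (α + β) * τ0) • p) ∧
      (∀ p : ℝ[X],
        A3 (A1 p) - A1 (A3 p) =
          (2 : ℝ) • (A1 (A2 p) + A2 (A1 p)) - (2 : ℝ) • A1 (A1 p)
            - ((α + β) * (α + β + 2)) • A2 p
            + (α * (α + β + 1) + β - 4 * τ0 - 2 * τ3) • A1 p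
            + ((α + β) * ((α + β + 2) * τ0 + (α + 1) * τ3)) • p) := by
  have hτ1 : τ1 = 1 - τ2 := by linarith
  subst hτ1
  intro A1 A2 A3 h1 h2 h3
  subst h1 h2 h3
  constructor <;> intro p <;> simp only []
  · rw [A3c, A3c]
    simp only [Mc, R3, Lop, derivative_add, derivative_sub, derivative_mul, derivative_X,
      derivative_one, derivative_C, derivative_ofNat, derivative_zero, derivative_neg,
      mul_zero, zero_mul, add_zero, zero_add, mul_one, one_mul, sub_zero, neg_zero]
    simp only [Polynomial.smul_eq_C_mul, map_add, map_sub, map_mul, map_one, map_pow,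
      map_neg, map_ofNat, mul_zero, zero_mul, add_zero, zero_add, mul_one, one_mul, sub_zero]
    ring
  · rw [A3c, A3c]
    simp only [Mc, R3, Lop, derivative_add, derivative_sub, derivative_mul, derivative_X,
      derivative_one, derivative_C, derivative_ofNat, derivative_zero, derivative_neg,
      mul_zero, zero_mul, add_zero, zero_add, mul_one, one_mul, sub_zero, neg_zero]
    simp only [Polynomial.smul_eq_C_mul, map_add, map_sub, map_mul, map_one, map_pow,
      map_neg, map_ofNat, mul_zero, zero_mul, add_zero, zero_add, mul_one, one_mul, sub_zero]
    ring
end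

section
/- Let N be a natural number and for 0 ≤ n ≤ N let ψ_n(x) = x^n(1−x)^{N−n} ∈ ℝ[x]. Then for every n with 1 ≤ n ≤ N−1, L ψ_n = (N−n)(N−n+β)·ψ_{n+1} + (2n² + (α−β−2N)n − (α+1)N)·ψ_n + n(n+α)·ψ_{n−1}; moreover L ψ_0 = N(N+β)ψ_1 − (α+1)N·ψ_0 and L ψ_N = (2N² + (α−β−2N)N − (α+1)N)·ψ_N + N(N+α)·ψ_{N−1}. Thus L acts tridiagonally on the eigenbasis of the degenerate operator M. -/
open Polynomial

lemma key (α β : ℝ) (a b : ℕ) :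
    Lop α β (X ^ (a+1) * (1 - X) ^ (b+1)) =
      (((b:ℝ)+1) * (((b:ℝ)+1)+β)) • (X ^ (a+2) * (1 - X) ^ b)
      + (2*((a:ℝ)+1)^2 + (α-β-2*((a:ℝ)+(b:ℝ)+2))*((a:ℝ)+1) - (α+1)*((a:ℝ)+(b:ℝ)+2)) • (X ^ (a+1) * (1 - X) ^ (b+1))
      + (((a:ℝ)+1) * (((a:ℝ)+1)+α)) • (X ^ a * (1 - X) ^ (b+2)) := by
  rcases a with _ | a <;> rcases b with _ | b <;>
  · simp only [Lop, smul_eq_C_mul, derivative_mul, derivative_pow, derivative_X, derivative_one,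
      derivative_add, derivative_sub, derivative_C, derivative_zero, Nat.add_sub_cancel,
      Nat.cast_add, Nat.cast_one, Nat.cast_zero, map_ofNat, C_add, C_mul, C_sub, C_1, C_0,
      map_one, pow_zero]
    norm_num
    ring


lemma key0 (α β : ℝ) (b : ℕ) :
    Lop α β ((1 - X) ^ (b+1)) =
      (((b:ℝ)+1) * (((b:ℝ)+1)+β)) • (X * (1 - X) ^ b)
      - ((α+1)*((b:ℝ)+1)) • ((1 - X) ^ (b+1)) := by
  rcases b with _ | b <;>
  · simp only [Lop, smul_eq_C_mul, derivative_mul, derivative_pow, derivative_X, derivative_one,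
      derivative_add, derivative_sub, derivative_C, derivative_zero, Nat.add_sub_cancel,
      Nat.cast_add, Nat.cast_one, Nat.cast_zero, map_ofNat, C_add, C_mul, C_sub, C_1, C_0,
      map_one, pow_zero]
    norm_num
    ring

lemma keyN (α β : ℝ) (a : ℕ) :
    Lop α β (X ^ (a+1)) =
      (2*((a:ℝ)+1)^2 + (α-β-2*((a:ℝ)+1))*((a:ℝ)+1) - (α+1)*((a:ℝ)+1)) • (X ^ (a+1))
      + (((a:ℝ)+1) * (((a:ℝ)+1)+α)) • (X ^ a * (1 - X)) := by
  rcases a with _ | a <;>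
  · simp only [Lop, smul_eq_C_mul, derivative_mul, derivative_pow, derivative_X, derivative_one,
      derivative_add, derivative_sub, derivative_C, derivative_zero, Nat.add_sub_cancel,
      Nat.cast_add, Nat.cast_one, Nat.cast_zero, map_ofNat, C_add, C_mul, C_sub, C_1, C_0,
      map_one, pow_zero]
    norm_num
    ring


/-- `L` acts tridiagonally on the basis `ψ_n(x) = x^n(1-x)^{N-n}`, `0 ≤ n ≤ N`, which is
the eigenbasis of the degenerate operator `M`. -/
theorem L_tridiagonal_on_Hahn_basis (α β : ℝ) (N : ℕ) :
    ∀ ψ : ℕ → ℝ[X], ψ = (fun n => X ^ n * (1 - X) ^ (N - n)) →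
      (∀ n : ℕ, 1 ≤ n → n ≤ N - 1 →
        Lop α β (ψ n) =
          (((N : ℝ) - n) * ((N : ℝ) - n + β)) • ψ (n + 1)
            + (2 * (n : ℝ) ^ 2 + (α - β - 2 * N) * n - (α + 1) * N) • ψ n
            + ((n : ℝ) * ((n : ℝ) + α)) • ψ (n - 1)) ∧
      Lop α β (ψ 0) = ((N : ℝ) * ((N : ℝ) + β)) • ψ 1 - ((α + 1) * N) • ψ 0 ∧
      Lop α β (ψ N) =
        (2 * (N : ℝ) ^ 2 + (α - β - 2 * N) * N - (α + 1) * N) • ψ N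
          + ((N : ℝ) * ((N : ℝ) + α)) • ψ (N - 1) := by
  rintro ψ rfl
  refine ⟨fun n h1 h2 => ?_, ?_, ?_⟩
  · obtain ⟨a, rfl⟩ : ∃ a, n = a + 1 := ⟨n - 1, by omega⟩
    obtain ⟨c, rfl⟩ : ∃ c, N = a + c + 2 := ⟨N - a - 2, by omega⟩
    simp only [show a + c + 2 - (a + 1) = c + 1 from by omega,
      show a + c + 2 - (a + 1 + 1) = c from by omega,
      show a + 1 - 1 = a from by omega,
      show a + c + 2 - a = c + 2 from by omega]
    rw [key α β a c]
    simp only [smul_eq_C_mul]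
    push_cast
    ring
  · rcases N with _ | b
    · norm_num [Lop]
    · simp only [pow_zero, one_mul, pow_one, Nat.sub_zero, Nat.add_sub_cancel]
      rw [key0 α β b]
      simp only [smul_eq_C_mul]
      push_cast
      ring
  · rcases N with _ | a
    · norm_num [Lop]
    · simp only [Nat.sub_self, pow_zero, mul_one, Nat.add_sub_cancel,
        show a + 1 - a = 1 from by omega, pow_one]
      rw [keyN α β a]
      simp only [smul_eq_C_mul]
      push_cast
      ring
end
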